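/- arXiv:1503.03449 — 3 statements merged into one kernel-verified Lean document; each statement's English description precedes it below -/
import Mathlib

section
/- For every p with 0 < p < 1, setting s = min(p, p(1+q)²/(2+q)), the symmetric point (s, s) belongs to the global delayed-CSIT region C₈(p) but violates the no-CSIT sum constraint: 2s > 1 − q². Consequently C₀(p) is a strict subset of C₈(p) for 0 < p < 1. -/
/-!
On the diagonal `R₁ = R₂ = s` both weighted-sum constraints of the delayed-CSIT region read
`(2 + q) s ≤ p (1 + q)²`, whereas the no-CSIT sum constraint reads `2 s ≤ 1 - q² = p (1 + q)`.
Since `2 (1 + q) > 2 + q` for `q > 0`, the delayed-CSIT corner lies strictly beyond the no-CSIT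
sum line, and so does `(p, p)` because `1 + q < 2`.
-/

/-- No-CSIT capacity region of the two-user erasure IC, `q = 1 - p`. -/
def noCSITRegion (p : ℝ) : Set (ℝ × ℝ) :=
  {R | 0 ≤ R.1 ∧ R.1 ≤ p ∧ 0 ≤ R.2 ∧ R.2 ≤ p ∧ R.1 + R.2 ≤ 1 - (1 - p) ^ 2}

/-- Global delayed-CSIT capacity region of the two-user erasure IC, `q = 1 - p`. -/
def globalDelayedCSITRegion (p : ℝ) : Set (ℝ × ℝ) :=
  {R | 0 ≤ R.1 ∧ R.1 ≤ p ∧ 0 ≤ R.2 ∧ R.2 ≤ p ∧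
    R.1 + (1 + (1 - p)) * R.2 ≤ p * (1 + (1 - p)) ^ 2 ∧
    R.2 + (1 + (1 - p)) * R.1 ≤ p * (1 + (1 - p)) ^ 2}

/-- The rate at which the two weighted-sum constraints of the delayed-CSIT region meet the
diagonal `R₁ = R₂`. -/
noncomputable def symmetricDelayedRate (p : ℝ) : ℝ :=
  p * (1 + (1 - p)) ^ 2 / (2 + (1 - p))

theorem noCSITRegion_subset_globalDelayedCSITRegion {p : ℝ} (hp0 : 0 ≤ p) (hp1 : p ≤ 1) :
    noCSITRegion p ⊆ globalDelayedCSITRegion p := by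
  rintro ⟨R₁, R₂⟩ ⟨h₁, h₁p, h₂, h₂p, hsum⟩
  -- `R₁ + (1 + q) R₂ ≤ (1 - q²) + q p = p (1 + 2q) ≤ p (1 + q)²`
  have hq : 0 ≤ 1 - p := by linarith
  refine ⟨h₁, h₁p, h₂, h₂p, ?_, ?_⟩ <;>
    nlinarith [mul_le_mul_of_nonneg_left h₁p hq, mul_le_mul_of_nonneg_left h₂p hq,
      mul_nonneg hp0 (sq_nonneg (1 - p))]

theorem pair_mem_globalDelayedCSITRegion {p s : ℝ} (hs0 : 0 ≤ s) (hsp : s ≤ p)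
    (hs : (2 + (1 - p)) * s ≤ p * (1 + (1 - p)) ^ 2) :
    (s, s) ∈ globalDelayedCSITRegion p :=
  ⟨hs0, hsp, hs0, hsp, by linarith, by linarith⟩

theorem pair_not_mem_noCSITRegion {p s : ℝ} (hs : 1 - (1 - p) ^ 2 < 2 * s) :
    (s, s) ∉ noCSITRegion p :=
  fun h => by linarith [h.2.2.2.2]

theorem one_sub_sq_lt_two_mul {p : ℝ} (hp : p ≠ 0) : 1 - (1 - p) ^ 2 < 2 * p := by
  nlinarith [sq_pos_of_ne_zero hp]

theorem one_sub_sq_lt_two_mul_symmetricDelayedRate {p : ℝ} (hp0 : 0 < p) (hp1 : p < 1) :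
    1 - (1 - p) ^ 2 < 2 * symmetricDelayedRate p := by
  rw [symmetricDelayedRate, mul_div_assoc', lt_div_iff₀ (by linarith)]
  -- after clearing the denominator, the difference of the two sides is `p (1 - p) (2 - p)`
  nlinarith [mul_pos (mul_pos hp0 (sub_pos.2 hp1)) (by linarith : (0 : ℝ) < 2 - p)]

/-- for `0 < p < 1` and `s = min (p, p(1+q)²/(2+q))` with `q = 1-p`,
the symmetric point `(s,s)` lies in the global delayed-CSIT region but violates the
no-CSIT sum constraint `2s > 1 - q²`; consequently the no-CSIT region is a strict
subset of the global delayed-CSIT region. -/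
theorem symmetric_point_strict_gain (p : ℝ) (hp0 : 0 < p) (hp1 : p < 1) :
    let q := 1 - p
    let s := min p (p * (1 + q) ^ 2 / (2 + q))
    (s, s) ∈ globalDelayedCSITRegion p ∧ 2 * s > 1 - q ^ 2 ∧
      noCSITRegion p ⊂ globalDelayedCSITRegion p := by
  intro q s
  have hq : 0 < 2 + q := by simp only [q]; linarith
  have hgt : 1 - q ^ 2 < 2 * s := by
    rw [mul_min_of_nonneg _ _ zero_le_two]
    exact lt_min (one_sub_sq_lt_two_mul hp0.ne')
      (one_sub_sq_lt_two_mul_symmetricDelayedRate hp0 hp1)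
  have hs0 : 0 ≤ s := by nlinarith [sq_nonneg q]
  have hmem : (s, s) ∈ globalDelayedCSITRegion p :=
    pair_mem_globalDelayedCSITRegion hs0 (min_le_left _ _)
      ((le_div_iff₀' hq).1 (min_le_right _ _))
  refine ⟨hmem, hgt, ?_⟩
  exact (Set.ssubset_iff_of_subset
    (noCSITRegion_subset_globalDelayedCSITRegion hp0.le hp1.le)).2
    ⟨_, hmem, pair_not_mem_noCSITRegion hgt⟩
end

section
/- For every p ∈ [0,1], the maximum of R₁ + R₂ over the global delayed-CSIT region C₈(p) equals 2·min(p, p(1+q)²/(2+q)); i.e., every (R₁,R₂) ∈ C₈(p) satisfies R₁ + R₂ ≤ 2·min(p, p(1+q)²/(2+q)), and this value is attained at the symmetric point (s,s) with s = min(p, p(1+q)²/(2+q)). (Equivalently, with β = 2 − p = 1 + q, the maximum symmetric rate is min{p, β(1−q²)/(1+β)}.) -/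
/-- for every `p ∈ [0,1]`, the maximum of `R₁ + R₂` over the global
delayed-CSIT region equals `2 * min (p, p(1+q)²/(2+q))` with `q = 1-p`: every point
of the region satisfies the bound, and it is attained at the symmetric point
`(s,s)` with `s = min (p, p(1+q)²/(2+q))`. -/
theorem globalDelayedCSIT_max_sum_rate (p : ℝ) (hp0 : 0 ≤ p) (hp1 : p ≤ 1) :
    let q := 1 - p
    let s := min p (p * (1 + q) ^ 2 / (2 + q))
    (∀ R ∈ globalDelayedCSITRegion p, R.1 + R.2 ≤ 2 * s) ∧
      (s, s) ∈ globalDelayedCSITRegion p ∧ s + s = 2 * s := by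
  intro q s
  have hq : q = 1 - p := rfl
  have hden : (0:ℝ) < 2 + q := by rw [hq]; linarith
  have hnum : 0 ≤ p * (1 + q) ^ 2 := by positivity
  have hs2 : s ≤ p * (1 + q) ^ 2 / (2 + q) := min_le_right _ _
  have hsp : s ≤ p := min_le_left _ _
  have hs0 : 0 ≤ s := le_min hp0 (div_nonneg hnum hden.le)
  have hkey : s + (1 + q) * s ≤ p * (1 + q) ^ 2 := by
    have : (2 + q) * s ≤ (2 + q) * (p * (1 + q) ^ 2 / (2 + q)) := by
      exact mul_le_mul_of_nonneg_left hs2 hden.le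
    rw [mul_div_cancel₀ _ hden.ne'] at this
    nlinarith
  refine ⟨?_, ⟨hs0, hsp, hs0, hsp, by simpa [hq] using hkey, by simpa [hq] using hkey⟩,
    (two_mul s).symm⟩
  rintro ⟨R1, R2⟩ ⟨h1, h2, h3, h4, h5, h6⟩
  simp only at h5 h6 ⊢
  rcases min_cases p (p * (1 + q) ^ 2 / (2 + q)) with ⟨he, _⟩ | ⟨he, hle⟩
  · show R1 + R2 ≤ 2 * s
    rw [show s = p from he]; linarith
  · show R1 + R2 ≤ 2 * s
    rw [show s = p * (1 + q) ^ 2 / (2 + q) from he, mul_div_assoc', le_div_iff₀ hden]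
    rw [← hq] at h5 h6
    nlinarith
end

section
/- Let n, m be natural numbers with m ≤ n, and let M be a uniformly random n × m matrix over the field 𝔽₂ (equivalently, each of the nm entries is an independent uniform element of ZMod 2). Then the probability that M fails to have full column rank — i.e., that there exists a nonzero vector v ∈ 𝔽₂^m with M·v = 0 — is at most (2^m − 1)·2^{−n} ≤ 2^{m−n}. -/
open Matrix Finset

lemma zmod2_ne_zero (x : ZMod 2) (h : x ≠ 0) : x = 1 := by
  revert h; revert x; decide

lemma cardKer (m : ℕ) (v : Fin m → ZMod 2) (hv : v ≠ 0) :
    Fintype.card {w : Fin m → ZMod 2 // w ⬝ᵥ v = 0} = 2 ^ (m - 1) := by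
  obtain ⟨j, hj⟩ : ∃ j, v j ≠ 0 := Function.ne_iff.mp hv
  have hj1 : v j = 1 := zmod2_ne_zero _ hj
  have hm : 1 ≤ m := Nat.one_le_iff_ne_zero.mpr (by rintro rfl; exact j.elim0)
  classical
  set A := Finset.univ.filter (fun w : Fin m → ZMod 2 => w ⬝ᵥ v = 0) with hA
  set B := Finset.univ.filter (fun w : Fin m → ZMod 2 => w ⬝ᵥ v = 1) with hB
  have key : ∀ w : Fin m → ZMod 2, (w + Pi.single j 1) ⬝ᵥ v = w ⬝ᵥ v + 1 := by
    intro w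
    rw [add_dotProduct, single_dotProduct, hj1, one_mul]
  have hinv : ∀ w : Fin m → ZMod 2, (w + Pi.single j 1) + Pi.single j 1 = w := by
    intro w
    rw [add_assoc]
    have : (Pi.single j 1 + Pi.single j 1 : Fin m → ZMod 2) = 0 := by
      ext i; simp [Pi.single_apply]; split <;> decide
    rw [this, add_zero]
  have hcard : A.card = B.card := by
    refine Finset.card_bij' (fun w _ => w + Pi.single j 1) (fun w _ => w + Pi.single j 1)
      ?_ ?_ ?_ ?_
    · intro w hw
      simp only [hA, hB, Finset.mem_filter, Finset.mem_univ, true_and] at hw ⊢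
      rw [key, hw, zero_add]
    · intro w hw
      simp only [hA, hB, Finset.mem_filter, Finset.mem_univ, true_and] at hw ⊢
      rw [key, hw]; decide
    · intro w _; exact hinv w
    · intro w _; exact hinv w
  have hsplit : A.card + B.card = 2 ^ m := by
    have := Finset.card_filter_add_card_filter_not
      (s := (Finset.univ : Finset (Fin m → ZMod 2)))
      (p := fun w => w ⬝ᵥ v = 0)
    have hBeq : Finset.univ.filter (fun w : Fin m → ZMod 2 => ¬ w ⬝ᵥ v = 0) = B := by
      apply Finset.filter_congr
      intro w _
      constructor
      · intro h; exact zmod2_ne_zero _ h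
      · intro h; rw [h]; decide
    rw [hBeq] at this
    rw [this]
    simp [Fintype.card_fun]
  have h2 : 2 * A.card = 2 ^ m := by omega
  have hpow : 2 ^ m = 2 * 2 ^ (m - 1) := by
    conv_lhs => rw [show m = (m-1) + 1 by omega]
    ring
  have hAcard : A.card = 2 ^ (m - 1) := by omega
  rw [Fintype.card_subtype]
  exact hAcard

lemma cardMat (n m : ℕ) (v : Fin m → ZMod 2) (hv : v ≠ 0) :
    Fintype.card {M : Matrix (Fin n) (Fin m) (ZMod 2) // M.mulVec v = 0} = (2 ^ (m - 1)) ^ n := by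
  classical
  have e1 : {M : Matrix (Fin n) (Fin m) (ZMod 2) // M.mulVec v = 0} ≃
      {f : Fin n → Fin m → ZMod 2 // ∀ i, f i ⬝ᵥ v = 0} :=
    (Equiv.subtypeEquiv (Matrix.of (m := Fin n) (n := Fin m) (α := ZMod 2)).symm
      (fun M => by
        simp only [Matrix.mulVec, funext_iff]
        rfl))
  have e2 : {f : Fin n → Fin m → ZMod 2 // ∀ i, f i ⬝ᵥ v = 0} ≃
      (Fin n → {w : Fin m → ZMod 2 // w ⬝ᵥ v = 0}) :=
    Equiv.subtypePiEquivPi (β := fun _ : Fin n => Fin m → ZMod 2) (p := fun _ w => w ⬝ᵥ v = 0)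
  rw [Fintype.card_congr (e1.trans e2), Fintype.card_fun, cardKer m v hv, Fintype.card_fin]

/-- for `m ≤ n`, the probability (under the uniform measure on
`n × m` matrices over `𝔽₂`) that a matrix fails to have full column rank, i.e.
that some nonzero `v ∈ 𝔽₂^m` satisfies `M ⬝ v = 0`, is at most
`(2^m − 1) · 2^{−n}`, which in turn is at most `2^{m−n}`. -/
theorem random_binary_matrix_full_column_rank (n m : ℕ) (hm : m ≤ n) :
    (Nat.card {M : Matrix (Fin n) (Fin m) (ZMod 2) //
        ∃ v : Fin m → ZMod 2, v ≠ 0 ∧ M.mulVec v = 0} : ℝ) /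
      (Nat.card (Matrix (Fin n) (Fin m) (ZMod 2)) : ℝ) ≤
        ((2 : ℝ) ^ m - 1) * (2 : ℝ) ^ (-(n : ℤ)) ∧
    ((2 : ℝ) ^ m - 1) * (2 : ℝ) ^ (-(n : ℤ)) ≤ (2 : ℝ) ^ ((m : ℤ) - (n : ℤ)) := by
  classical
  constructor
  · -- first part
    have hden : (Nat.card (Matrix (Fin n) (Fin m) (ZMod 2)) : ℝ) = 2 ^ (n * m) := by
      rw [Nat.card_eq_fintype_card,
        Fintype.card_congr ((Matrix.of (m := Fin n) (n := Fin m) (α := ZMod 2)).symm),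
        Fintype.card_fun, Fintype.card_fun, ZMod.card, Fintype.card_fin, Fintype.card_fin,
        ← pow_mul]
      push_cast
      rw [Nat.mul_comm]
    rcases Nat.eq_zero_or_pos m with hm0 | hmpos
    · subst hm0
      have : IsEmpty {M : Matrix (Fin n) (Fin 0) (ZMod 2) //
          ∃ v : Fin 0 → ZMod 2, v ≠ 0 ∧ M.mulVec v = 0} := by
        constructor
        rintro ⟨M, v, hv, -⟩
        exact hv (Subsingleton.elim _ _)
      rw [Nat.card_of_isEmpty]
      simp
    · -- m ≥ 1
      have hnum : Nat.card {M : Matrix (Fin n) (Fin m) (ZMod 2) //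
          ∃ v : Fin m → ZMod 2, v ≠ 0 ∧ M.mulVec v = 0} ≤ (2 ^ m - 1) * (2 ^ (m - 1)) ^ n := by
        rw [Nat.card_eq_fintype_card, Fintype.card_subtype]
        have hsub : Finset.univ.filter (fun M : Matrix (Fin n) (Fin m) (ZMod 2) =>
            ∃ v : Fin m → ZMod 2, v ≠ 0 ∧ M.mulVec v = 0) ⊆
            (Finset.univ.filter (fun v : Fin m → ZMod 2 => v ≠ 0)).biUnion
              (fun v => Finset.univ.filter (fun M : Matrix (Fin n) (Fin m) (ZMod 2) =>
                M.mulVec v = 0)) := by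
          intro M hM
          simp only [Finset.mem_filter, Finset.mem_univ, true_and] at hM
          obtain ⟨v, hv, hMv⟩ := hM
          simp only [Finset.mem_biUnion, Finset.mem_filter, Finset.mem_univ, true_and]
          exact ⟨v, hv, hMv⟩
        calc _ ≤ _ := Finset.card_le_card hsub
          _ ≤ ∑ v ∈ Finset.univ.filter (fun v : Fin m → ZMod 2 => v ≠ 0),
              (Finset.univ.filter (fun M : Matrix (Fin n) (Fin m) (ZMod 2) =>
                M.mulVec v = 0)).card := Finset.card_biUnion_le
          _ = ∑ v ∈ Finset.univ.filter (fun v : Fin m → ZMod 2 => v ≠ 0),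
              (2 ^ (m - 1)) ^ n := by
            apply Finset.sum_congr rfl
            intro v hv
            simp only [Finset.mem_filter, Finset.mem_univ, true_and] at hv
            rw [← Fintype.card_subtype]
            exact cardMat n m v hv
          _ = (2 ^ m - 1) * (2 ^ (m - 1)) ^ n := by
            rw [Finset.sum_const, smul_eq_mul]
            congr 1
            rw [Finset.filter_ne', Finset.card_erase_of_mem (Finset.mem_univ _)]
            simp [Fintype.card_fun]
      have hnumR : (Nat.card {M : Matrix (Fin n) (Fin m) (ZMod 2) //
          ∃ v : Fin m → ZMod 2, v ≠ 0 ∧ M.mulVec v = 0} : ℝ) ≤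
          ((2 : ℝ) ^ m - 1) * ((2 : ℝ) ^ (m - 1)) ^ n := by
        calc (Nat.card {M : Matrix (Fin n) (Fin m) (ZMod 2) //
          ∃ v : Fin m → ZMod 2, v ≠ 0 ∧ M.mulVec v = 0} : ℝ) ≤
            (((2 ^ m - 1) * (2 ^ (m - 1)) ^ n : ℕ) : ℝ) := by exact_mod_cast hnum
          _ = ((2 : ℝ) ^ m - 1) * ((2 : ℝ) ^ (m - 1)) ^ n := by
            have h1 : (1 : ℕ) ≤ 2 ^ m := Nat.one_le_two_pow
            push_cast [h1]
            ring
      rw [hden, div_le_iff₀ (by positivity)]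
      refine hnumR.trans_eq ?_
      have hnat : (m - 1) * n + n = n * m := by
        obtain ⟨k, rfl⟩ : ∃ k, m = k + 1 := ⟨m - 1, by omega⟩
        simp [Nat.add_sub_cancel]
        ring
      have hZ : (((m - 1) * n : ℕ) : ℤ) = -(n : ℤ) + ((n * m : ℕ) : ℤ) := by
        have := congrArg (Nat.cast : ℕ → ℤ) hnat
        push_cast at this ⊢
        linarith
      have e1 : ((2 : ℝ) ^ (m - 1)) ^ n = (2 : ℝ) ^ (((m - 1) * n : ℕ) : ℤ) := by
        rw [← pow_mul, zpow_natCast]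
      have e2 : (2 : ℝ) ^ (-(n : ℤ)) * (2 : ℝ) ^ (n * m) =
          (2 : ℝ) ^ (-(n : ℤ) + ((n * m : ℕ) : ℤ)) := by
        rw [← zpow_natCast (2 : ℝ) (n * m), ← zpow_add₀ (by norm_num : (2 : ℝ) ≠ 0)]
      rw [mul_assoc, e2, e1, hZ]
  · -- second part
    have h1 : ((2 : ℝ) ^ m - 1) ≤ (2 : ℝ) ^ m := by linarith
    have h2 : (0 : ℝ) < (2 : ℝ) ^ (-(n : ℤ)) := by positivity
    calc ((2 : ℝ) ^ m - 1) * (2 : ℝ) ^ (-(n : ℤ)) ≤ (2 : ℝ) ^ m * (2 : ℝ) ^ (-(n : ℤ)) :=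
          mul_le_mul_of_nonneg_right h1 h2.le
      _ = (2 : ℝ) ^ ((m : ℤ) - (n : ℤ)) := by
          rw [← zpow_natCast (2:ℝ) m, ← zpow_add₀ (by norm_num : (2:ℝ) ≠ 0),
            Int.sub_eq_add_neg]
end
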